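/- arXiv:1705.09675 — 4 statements merged into one kernel-verified Lean document; each statement's English description precedes it below -/
import Mathlib

section
/- For probability density functions P and Q on a measurable space X, the Fisher IPM over the space of all square-integrable functions with respect to (P+Q)/2, defined as sup over nonzero f of (E_P[f] - E_Q[f]) / sqrt((1/2)E_P[f^2] + (1/2)E_Q[f^2]), equals the symmetric chi-squared distance chi_2(P,Q) = sqrt(∫ (P(x)-Q(x))^2 / ((P(x)+Q(x))/2) dx). -/
/-!
Write `m = (p + q) / 2`. For a critic `f` with `∫ f² m < ∞`, the numerator of the Fisher ratio is
`∫ f (p - q) = ⟪f, (p - q) / m⟫` and its denominator is `‖f‖`, both in `L²(m)`. By Cauchy–Schwarz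
the ratio is at most `‖(p - q) / m‖ = √(∫ (p - q)² / m)`, and the critic `(p - q) / m` attains
this bound; it is admissible because `p ≠ q` makes `∫ (p - q)² / m` positive.
-/

open MeasureTheory

section

variable {X : Type*} {p q : X → ℝ}

/-- Where `p + q = 0` this is `0` by the convention `x / 0 = 0`; for densities `p = q = 0` there. -/
noncomputable def optimalCritic (p q : X → ℝ) (x : X) : ℝ :=
  (p x - q x) / ((p x + q x) / 2)

theorem optimalCritic_sq_mul (x : X) :
    optimalCritic p q x ^ 2 * ((p x + q x) / 2) = (p x - q x) ^ 2 / ((p x + q x) / 2) := by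
  rcases eq_or_ne ((p x + q x) / 2) 0 with h | h
  · simp [optimalCritic, h]
  · rw [optimalCritic, div_pow, div_mul_eq_mul_div, sq ((p x + q x) / 2), mul_div_mul_right _ _ h]

theorem optimalCritic_mul_sub (x : X) :
    optimalCritic p q x * (p x - q x) = (p x - q x) ^ 2 / ((p x + q x) / 2) := by
  rw [optimalCritic, div_mul_eq_mul_div, sq]

theorem optimalCritic_mul_avg {x : X} (hpx : 0 ≤ p x) (hqx : 0 ≤ q x) :
    optimalCritic p q x * ((p x + q x) / 2) = p x - q x :=
  div_mul_cancel_of_imp fun h => by linarith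

variable [MeasurableSpace X] {μ : Measure X}

theorem integral_mul_le_sqrt_mul_sqrt {u v : X → ℝ}
    (hu : MemLp u 2 μ) (hv : MemLp v 2 μ) :
    ∫ x, u x * v x ∂μ ≤ √(∫ x, u x ^ 2 ∂μ) * √(∫ x, v x ^ 2 ∂μ) := by
  have inner_toLp : ∀ {f g : X → ℝ} (hf : MemLp f 2 μ) (hg : MemLp g 2 μ),
      inner ℝ (hf.toLp : X →₂[μ] ℝ) hg.toLp = ∫ x, f x * g x ∂μ := fun hf hg => by
    rw [L2.inner_def]
    refine integral_congr_ae ?_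
    filter_upwards [hf.coeFn_toLp, hg.coeFn_toLp] with x hfx hgx
    simp [hfx, hgx, mul_comm]
  have h := real_inner_le_norm (hu.toLp : X →₂[μ] ℝ) hv.toLp
  rw [norm_eq_sqrt_real_inner, norm_eq_sqrt_real_inner, inner_toLp, inner_toLp, inner_toLp] at h
  simpa only [sq] using h

theorem integral_mul_mul_le_sqrt_mul_sqrt {f g w : X → ℝ} (hw0 : ∀ x, 0 ≤ w x)
    (hf : AEStronglyMeasurable f μ) (hg : AEStronglyMeasurable g μ)
    (hw : AEStronglyMeasurable w μ) (hfw : Integrable (fun x => f x ^ 2 * w x) μ)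
    (hgw : Integrable (fun x => g x ^ 2 * w x) μ) :
    ∫ x, f x * g x * w x ∂μ ≤ √(∫ x, f x ^ 2 * w x ∂μ) * √(∫ x, g x ^ 2 * w x ∂μ) := by
  have sq_mul_sqrt : ∀ (h : X → ℝ) x, (h x * √(w x)) ^ 2 = h x ^ 2 * w x := fun h x => by
    rw [mul_pow, Real.sq_sqrt (hw0 x)]
  have memLp_mul_sqrt : ∀ h : X → ℝ, AEStronglyMeasurable h μ →
      Integrable (fun x => h x ^ 2 * w x) μ → MemLp (fun x => h x * √(w x)) 2 μ :=
    fun h hh hhw => (memLp_two_iff_integrable_sq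
      (hh.mul (Real.continuous_sqrt.comp_aestronglyMeasurable hw))).2
      (by simpa only [Pi.mul_apply, sq_mul_sqrt] using hhw)
  have h := integral_mul_le_sqrt_mul_sqrt
    (memLp_mul_sqrt f hf hfw) (memLp_mul_sqrt g hg hgw)
  simp only [sq_mul_sqrt] at h
  convert h using 3 with x
  rw [mul_mul_mul_comm, Real.mul_self_sqrt (hw0 x)]

theorem integrable_mul_of_integrable_sq_mul {f w : X → ℝ} (hw0 : ∀ x, 0 ≤ w x)
    (hf : AEStronglyMeasurable f μ) (hw : Integrable w μ)
    (hfw : Integrable (fun x => f x ^ 2 * w x) μ) : Integrable (fun x => f x * w x) μ :=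
  (hfw.add hw).mono' (hf.mul hw.aestronglyMeasurable) <| ae_of_all _ fun x => by
    rw [Pi.add_apply, norm_mul, Real.norm_eq_abs, Real.norm_of_nonneg (hw0 x)]
    nlinarith [sq_abs (f x), mul_nonneg (sq_nonneg (|f x| - 1)) (hw0 x), hw0 x]

theorem integrable_sq_mul_of_le_mul {f v w : X → ℝ} {c : ℝ} (hv0 : ∀ x, 0 ≤ v x)
    (hvw : ∀ x, v x ≤ c * w x) (hfv : AEStronglyMeasurable (fun x => f x ^ 2 * v x) μ)
    (hfw : Integrable (fun x => f x ^ 2 * w x) μ) : Integrable (fun x => f x ^ 2 * v x) μ :=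
  (hfw.const_mul c).mono' hfv <| ae_of_all _ fun x => by
    rw [Real.norm_of_nonneg (mul_nonneg (sq_nonneg _) (hv0 x))]
    calc f x ^ 2 * v x ≤ f x ^ 2 * (c * w x) := mul_le_mul_of_nonneg_left (hvw x) (sq_nonneg _)
      _ = c * (f x ^ 2 * w x) := by ring

noncomputable def fisherRatio (μ : Measure X) (p q f : X → ℝ) : ℝ :=
  (∫ x, f x * p x ∂μ - ∫ x, f x * q x ∂μ) /
    √((1 / 2) * ∫ x, f x ^ 2 * p x ∂μ + (1 / 2) * ∫ x, f x ^ 2 * q x ∂μ)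

theorem measurable_optimalCritic (hp : Measurable p) (hq : Measurable q) :
    Measurable (optimalCritic p q) :=
  (hp.sub hq).div ((hp.add hq).div_const 2)

theorem integrable_optimalCritic_sq_mul
    (hchi : Integrable (fun x => (p x - q x) ^ 2 / ((p x + q x) / 2)) μ) :
    Integrable (fun x => optimalCritic p q x ^ 2 * ((p x + q x) / 2)) μ := by
  simpa only [optimalCritic_sq_mul] using hchi

theorem fisherRatio_eq_div_sqrt (hp0 : ∀ x, 0 ≤ p x) (hq0 : ∀ x, 0 ≤ q x)
    (hp_int : Integrable p μ) (hq_int : Integrable q μ) {f : X → ℝ} (hf : AEStronglyMeasurable f μ)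
    (hfm : Integrable (fun x => f x ^ 2 * ((p x + q x) / 2)) μ) :
    fisherRatio μ p q f =
      (∫ x, f x * (p x - q x) ∂μ) / √(∫ x, f x ^ 2 * ((p x + q x) / 2) ∂μ) := by
  have hfp2 : Integrable (fun x => f x ^ 2 * p x) μ :=
    integrable_sq_mul_of_le_mul (c := 2) hp0 (fun x => by linarith [hq0 x])
      ((hf.pow 2).mul hp_int.1) hfm
  have hfq2 : Integrable (fun x => f x ^ 2 * q x) μ :=
    integrable_sq_mul_of_le_mul (c := 2) hq0 (fun x => by linarith [hp0 x])
      ((hf.pow 2).mul hq_int.1) hfm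
  have hfp := integrable_mul_of_integrable_sq_mul hp0 hf hp_int hfp2
  have hfq := integrable_mul_of_integrable_sq_mul hq0 hf hq_int hfq2
  have hnum : ∫ x, f x * p x ∂μ - ∫ x, f x * q x ∂μ = ∫ x, f x * (p x - q x) ∂μ := by
    simp_rw [mul_sub, integral_sub hfp hfq]
  have hden : (1 / 2) * ∫ x, f x ^ 2 * p x ∂μ + (1 / 2) * ∫ x, f x ^ 2 * q x ∂μ =
      ∫ x, f x ^ 2 * ((p x + q x) / 2) ∂μ := by
    rw [← integral_const_mul, ← integral_const_mul,
      ← integral_add (hfp2.const_mul _) (hfq2.const_mul _)]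
    congr with x
    ring
  rw [fisherRatio, hnum, hden]

theorem fisherRatio_le_sqrt_integral_chiSq (hp0 : ∀ x, 0 ≤ p x) (hq0 : ∀ x, 0 ≤ q x)
    (hp : Measurable p) (hq : Measurable q) (hp_int : Integrable p μ) (hq_int : Integrable q μ)
    (hchi : Integrable (fun x => (p x - q x) ^ 2 / ((p x + q x) / 2)) μ)
    {f : X → ℝ} (hf : AEStronglyMeasurable f μ)
    (hfm : Integrable (fun x => f x ^ 2 * ((p x + q x) / 2)) μ) :
    fisherRatio μ p q f ≤ √(∫ x, (p x - q x) ^ 2 / ((p x + q x) / 2) ∂μ) := by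
  rw [fisherRatio_eq_div_sqrt hp0 hq0 hp_int hq_int hf hfm]
  refine div_le_of_le_mul₀ (Real.sqrt_nonneg _) (Real.sqrt_nonneg _) ?_
  calc ∫ x, f x * (p x - q x) ∂μ
      = ∫ x, f x * optimalCritic p q x * ((p x + q x) / 2) ∂μ := by
        simp_rw [mul_assoc, optimalCritic_mul_avg (hp0 _) (hq0 _)]
    _ ≤ √(∫ x, f x ^ 2 * ((p x + q x) / 2) ∂μ) *
          √(∫ x, optimalCritic p q x ^ 2 * ((p x + q x) / 2) ∂μ) :=
        integral_mul_mul_le_sqrt_mul_sqrt (fun x => by linarith [hp0 x, hq0 x])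
          hf (measurable_optimalCritic hp hq).aestronglyMeasurable
          ((hp.add hq).div_const 2).aestronglyMeasurable hfm
          (integrable_optimalCritic_sq_mul hchi)
    _ = _ := by simp_rw [optimalCritic_sq_mul, mul_comm]

theorem fisherRatio_optimalCritic (hp0 : ∀ x, 0 ≤ p x) (hq0 : ∀ x, 0 ≤ q x)
    (hp : Measurable p) (hq : Measurable q) (hp_int : Integrable p μ) (hq_int : Integrable q μ)
    (hchi : Integrable (fun x => (p x - q x) ^ 2 / ((p x + q x) / 2)) μ) :
    fisherRatio μ p q (optimalCritic p q) = √(∫ x, (p x - q x) ^ 2 / ((p x + q x) / 2) ∂μ) := by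
  rw [fisherRatio_eq_div_sqrt hp0 hq0 hp_int hq_int
    (measurable_optimalCritic hp hq).aestronglyMeasurable (integrable_optimalCritic_sq_mul hchi)]
  simp_rw [optimalCritic_mul_sub, optimalCritic_sq_mul, Real.div_sqrt]

theorem integral_chiSq_pos (hp0 : ∀ x, 0 ≤ p x) (hq0 : ∀ x, 0 ≤ q x) (hpq : ¬ p =ᵐ[μ] q)
    (hchi : Integrable (fun x => (p x - q x) ^ 2 / ((p x + q x) / 2)) μ) :
    0 < ∫ x, (p x - q x) ^ 2 / ((p x + q x) / 2) ∂μ := by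
  have hnonneg : ∀ x, 0 ≤ (p x - q x) ^ 2 / ((p x + q x) / 2) := fun x => by
    have := hp0 x; have := hq0 x; positivity
  refine (integral_nonneg hnonneg).lt_of_ne fun h => hpq ?_
  filter_upwards [(integral_eq_zero_iff_of_nonneg hnonneg hchi).1 h.symm] with x hx
  rcases div_eq_zero_iff.1 hx with h | h
  · exact sub_eq_zero.1 (pow_eq_zero_iff two_ne_zero |>.1 h)
  · linarith [hp0 x, hq0 x]

end

/-- Fisher IPM at full capacity equals the symmetric chi-squared distance. -/
theorem fisher_ipm_full_capacity_eq_chi_squared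
    {X : Type*} [MeasurableSpace X] (μ : Measure X) (p q : X → ℝ)
    (hp : Measurable p) (hq : Measurable q)
    (hp0 : ∀ x, 0 ≤ p x) (hq0 : ∀ x, 0 ≤ q x)
    (hp1 : ∫ x, p x ∂μ = 1) (hq1 : ∫ x, q x ∂μ = 1)
    (hpq : ¬ (p =ᵐ[μ] q))
    (hchi : Integrable (fun x => (p x - q x) ^ 2 / ((p x + q x) / 2)) μ) :
    sSup {r : ℝ | ∃ f : X → ℝ, Measurable f ∧
        Integrable (fun x => f x ^ 2 * ((p x + q x) / 2)) μ ∧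
        0 < ∫ x, f x ^ 2 * ((p x + q x) / 2) ∂μ ∧
        r = (∫ x, f x * p x ∂μ - ∫ x, f x * q x ∂μ) /
            Real.sqrt ((1 / 2) * ∫ x, f x ^ 2 * p x ∂μ +
                       (1 / 2) * ∫ x, f x ^ 2 * q x ∂μ)} =
      Real.sqrt (∫ x, (p x - q x) ^ 2 / ((p x + q x) / 2) ∂μ) := by
  have hp_int := integrable_of_integral_eq_one hp1
  have hq_int := integrable_of_integral_eq_one hq1
  refine IsGreatest.csSup_eq ⟨⟨optimalCritic p q, measurable_optimalCritic hp hq,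
    integrable_optimalCritic_sq_mul hchi, ?_,
    (fisherRatio_optimalCritic hp0 hq0 hp hq hp_int hq_int hchi).symm⟩, ?_⟩
  · simpa only [optimalCritic_sq_mul] using integral_chiSq_pos hp0 hq0 hpq hchi
  · rintro r ⟨f, hf, hfm, -, rfl⟩
    exact fisherRatio_le_sqrt_integral_chiSq hp0 hq0 hp hq hp_int hq_int hchi
      hf.aestronglyMeasurable hfm
end

section
/- The function f_chi(x) = (1/chi_2(P,Q)) * (P(x)-Q(x)) / ((P(x)+Q(x))/2) satisfies the unit second-moment constraint (1/2)E_P[f_chi^2] + (1/2)E_Q[f_chi^2] = 1 and achieves E_P[f_chi] - E_Q[f_chi] = chi_2(P,Q), i.e., f_chi is an optimal critic for the Fisher IPM at full capacity. -/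
/-!
With `w = (p - q) / ((p + q) / 2)`, both sides of the claim are multiples of
`χ² = ∫ w (p - q)`: the mean discrepancy of `c • w` is `∫ c w (p - q) = c χ²`, and its
second moment under the mixture `(p + q) / 2` is `∫ c² w² (p + q) / 2 = c² χ²`.
Taking `c = 1 / χ` gives `1` and `χ`.
-/

open MeasureTheory

theorem div_sq_mul_self {K : Type*} [Field K] (a b : K) : (a / b) ^ 2 * b = a ^ 2 / b := by
  rcases eq_or_ne b 0 with rfl | hb
  · simp
  · field_simp

section Critic

variable {X : Type*} [MeasurableSpace X] {μ : Measure X} {p q : X → ℝ}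

theorem half_integral_mul_add_half_integral_mul {g : X → ℝ}
    (hp : Integrable (fun x => g x * p x) μ) (hq : Integrable (fun x => g x * q x) μ) :
    (1 / 2) * ∫ x, g x * p x ∂μ + (1 / 2) * ∫ x, g x * q x ∂μ
      = ∫ x, g x * ((p x + q x) / 2) ∂μ := by
  rw [← integral_const_mul, ← integral_const_mul, ← integral_add (hp.const_mul _) (hq.const_mul _)]
  congr 1 with x
  ring

theorem integral_mul_sub_integral_mul {g : X → ℝ}
    (hp : Integrable (fun x => g x * p x) μ) (hq : Integrable (fun x => g x * q x) μ) :
    ∫ x, g x * p x ∂μ - ∫ x, g x * q x ∂μ = ∫ x, g x * (p x - q x) ∂μ := by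
  rw [← integral_sub hp hq]
  congr 1 with x
  ring

theorem second_moment_scaled_critic (c : ℝ)
    (hp : Integrable (fun x => (c * ((p x - q x) / ((p x + q x) / 2))) ^ 2 * p x) μ)
    (hq : Integrable (fun x => (c * ((p x - q x) / ((p x + q x) / 2))) ^ 2 * q x) μ) :
    (1 / 2) * ∫ x, (c * ((p x - q x) / ((p x + q x) / 2))) ^ 2 * p x ∂μ
        + (1 / 2) * ∫ x, (c * ((p x - q x) / ((p x + q x) / 2))) ^ 2 * q x ∂μ
      = c ^ 2 * ∫ x, (p x - q x) ^ 2 / ((p x + q x) / 2) ∂μ := by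
  rw [half_integral_mul_add_half_integral_mul hp hq, ← integral_const_mul]
  congr 1 with x
  rw [mul_pow, mul_assoc, div_sq_mul_self]

theorem mean_discrepancy_scaled_critic (c : ℝ)
    (hp : Integrable (fun x => c * ((p x - q x) / ((p x + q x) / 2)) * p x) μ)
    (hq : Integrable (fun x => c * ((p x - q x) / ((p x + q x) / 2)) * q x) μ) :
    ∫ x, c * ((p x - q x) / ((p x + q x) / 2)) * p x ∂μ
        - ∫ x, c * ((p x - q x) / ((p x + q x) / 2)) * q x ∂μ
      = c * ∫ x, (p x - q x) ^ 2 / ((p x + q x) / 2) ∂μ := by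
  rw [integral_mul_sub_integral_mul hp hq, ← integral_const_mul]
  congr 1 with x
  ring

end Critic

theorem fisher_optimal_critic_general
    {X : Type*} [MeasurableSpace X] (μ : Measure X) (p q : X → ℝ)
    (chi2 : ℝ)
    (hchi2 : chi2 = Real.sqrt (∫ x, (p x - q x) ^ 2 / ((p x + q x) / 2) ∂μ))
    (hchi2_pos : 0 < chi2)
    (fchi : X → ℝ)
    (hfchi : fchi = fun x => (1 / chi2) * ((p x - q x) / ((p x + q x) / 2)))
    (hint_p : Integrable (fun x => fchi x * p x) μ)
    (hint_q : Integrable (fun x => fchi x * q x) μ)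
    (hint_p2 : Integrable (fun x => fchi x ^ 2 * p x) μ)
    (hint_q2 : Integrable (fun x => fchi x ^ 2 * q x) μ) :
    (1 / 2) * ∫ x, fchi x ^ 2 * p x ∂μ + (1 / 2) * ∫ x, fchi x ^ 2 * q x ∂μ = 1 ∧
    ∫ x, fchi x * p x ∂μ - ∫ x, fchi x * q x ∂μ = chi2 := by
  subst hfchi
  have hI : ∫ x, (p x - q x) ^ 2 / ((p x + q x) / 2) ∂μ = chi2 ^ 2 := by
    rw [hchi2, Real.sq_sqrt (Real.sqrt_pos.mp (hchi2 ▸ hchi2_pos)).le]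
  rw [second_moment_scaled_critic _ hint_p2 hint_q2,
    mean_discrepancy_scaled_critic _ hint_p hint_q, hI]
  constructor <;> field_simp

/-- The optimal critic `f_chi` satisfies the unit second-moment constraint and
achieves the chi-squared distance as its mean discrepancy. -/
theorem fisher_optimal_critic
    {X : Type*} [MeasurableSpace X] (μ : Measure X) (p q : X → ℝ)
    (hp : Measurable p) (hq : Measurable q)
    (hp0 : ∀ x, 0 ≤ p x) (hq0 : ∀ x, 0 ≤ q x)
    (hp1 : ∫ x, p x ∂μ = 1) (hq1 : ∫ x, q x ∂μ = 1)
    (hpq : ¬ (p =ᵐ[μ] q))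
    (hpos : ∀ x, 0 < p x + q x)
    (chi2 : ℝ)
    (hchi2 : chi2 = Real.sqrt (∫ x, (p x - q x) ^ 2 / ((p x + q x) / 2) ∂μ))
    (hchi2_pos : 0 < chi2)
    (hchi : Integrable (fun x => (p x - q x) ^ 2 / ((p x + q x) / 2)) μ)
    (fchi : X → ℝ)
    (hfchi : fchi = fun x => (1 / chi2) * ((p x - q x) / ((p x + q x) / 2)))
    (hint_p : Integrable (fun x => fchi x * p x) μ)
    (hint_q : Integrable (fun x => fchi x * q x) μ)
    (hint_p2 : Integrable (fun x => fchi x ^ 2 * p x) μ)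
    (hint_q2 : Integrable (fun x => fchi x ^ 2 * q x) μ) :
    (1 / 2) * ∫ x, fchi x ^ 2 * p x ∂μ + (1 / 2) * ∫ x, fchi x ^ 2 * q x ∂μ = 1 ∧
    ∫ x, fchi x * p x ∂μ - ∫ x, fchi x * q x ∂μ = chi2 :=
  fisher_optimal_critic_general μ p q chi2 hchi2 hchi2_pos fchi hfchi hint_p hint_q hint_p2 hint_q2
end

section
/- For unit-norm elements f and f_chi of L^2(X,(P+Q)/2), the relative approximation error identity holds: (chi_2(P,Q) - d_H(P,Q)) / chi_2(P,Q) = (1/2) · inf over f in H on the unit sphere of ‖f - f_chi‖^2 in L^2(X,(P+Q)/2). -/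
open MeasureTheory

/-!
For unit vectors `u, v` of a Hilbert space, `⟪u, v⟫ = 1 - ‖u - v‖² / 2`. In `L²((P + Q) / 2)` the
inner product of a critic `f` with `f_χ = (p - q) / ((p + q) / 2) / χ` is `(E_P f - E_Q f) / χ`,
so `‖f - f_χ‖² = 2 - 2 (E_P f - E_Q f) / χ` on the unit sphere. The infimum over `H` of this
antitone affine function of `E_P f - E_Q f` is the same function of its supremum `d_H(P, Q)`.
-/

theorem csInf_image_const_sub_mul {S : Set ℝ} (hne : S.Nonempty) (hbdd : BddAbove S)
    (a : ℝ) {b : ℝ} (hb : 0 ≤ b) :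
    sInf ((fun t => a - b * t) '' S) = a - b * sSup S := by
  have hanti : Antitone (fun t : ℝ => a - b * t) := fun s t hst => by
    dsimp only
    linarith [mul_le_mul_of_nonneg_left hst hb]
  exact (hanti.map_csSup_of_continuousAt (by fun_prop) hne hbdd).symm

section WeightedL2

variable {X : Type*} [MeasurableSpace X] {μ : Measure X}

theorem integral_sub_sq_mul_weight {f g w : X → ℝ}
    (hf : Integrable (fun x => f x ^ 2 * w x) μ) (hg : Integrable (fun x => g x ^ 2 * w x) μ)
    (hfg : Integrable (fun x => f x * g x * w x) μ) :
    ∫ x, (f x - g x) ^ 2 * w x ∂μ =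
      ∫ x, f x ^ 2 * w x ∂μ - 2 * ∫ x, f x * g x * w x ∂μ + ∫ x, g x ^ 2 * w x ∂μ := by
  calc ∫ x, (f x - g x) ^ 2 * w x ∂μ
      = ∫ x, f x ^ 2 * w x - 2 * (f x * g x * w x) + g x ^ 2 * w x ∂μ := by
        congr 1; funext x; ring
    _ = ∫ x, f x ^ 2 * w x - 2 * (f x * g x * w x) ∂μ + ∫ x, g x ^ 2 * w x ∂μ :=
        integral_add (hf.sub (hfg.const_mul 2)) hg
    _ = _ := by rw [integral_sub hf (hfg.const_mul 2), integral_const_mul]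

theorem integral_sub_sq_mul_weight_of_unit {f g w : X → ℝ}
    (hf : Integrable (fun x => f x ^ 2 * w x) μ) (hg : Integrable (fun x => g x ^ 2 * w x) μ)
    (hfg : Integrable (fun x => f x * g x * w x) μ)
    (hf1 : ∫ x, f x ^ 2 * w x ∂μ = 1) (hg1 : ∫ x, g x ^ 2 * w x ∂μ = 1) :
    ∫ x, (f x - g x) ^ 2 * w x ∂μ = 2 - 2 * ∫ x, f x * g x * w x ∂μ := by
  rw [integral_sub_sq_mul_weight hf hg hfg, hf1, hg1]
  ring

end WeightedL2

theorem mul_critic_mul_mixture {a b : ℝ} (hab : a + b ≠ 0) (c f : ℝ) :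
    f * ((1 / c) * ((a - b) / ((a + b) / 2))) * ((a + b) / 2) = (1 / c) * (f * a - f * b) := by
  field_simp

theorem critic_sq_mul_mixture {a b : ℝ} (hab : a + b ≠ 0) (c : ℝ) :
    ((1 / c) * ((a - b) / ((a + b) / 2))) ^ 2 * ((a + b) / 2) =
      (1 / c) ^ 2 * ((a - b) ^ 2 / ((a + b) / 2)) := by
  field_simp

theorem integral_sub_critic_sq {X : Type*} [MeasurableSpace X] {μ : Measure X} {p q : X → ℝ}
    (c : ℝ) (hpos : ∀ x, 0 < p x + q x)
    (hchi : Integrable (fun x => (p x - q x) ^ 2 / ((p x + q x) / 2)) μ)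
    {fchi : X → ℝ} (hfchi : fchi = fun x => (1 / c) * ((p x - q x) / ((p x + q x) / 2)))
    (hcrit : ∫ x, fchi x ^ 2 * ((p x + q x) / 2) ∂μ = 1)
    {f : X → ℝ} (hfp : Integrable (fun x => f x * p x) μ) (hfq : Integrable (fun x => f x * q x) μ)
    (hf : Integrable (fun x => f x ^ 2 * ((p x + q x) / 2)) μ)
    (hf1 : ∫ x, f x ^ 2 * ((p x + q x) / 2) ∂μ = 1) :
    ∫ x, (f x - fchi x) ^ 2 * ((p x + q x) / 2) ∂μ =
      2 - 2 / c * (∫ x, f x * p x ∂μ - ∫ x, f x * q x ∂μ) := by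
  subst hfchi
  beta_reduce at hcrit ⊢
  have hcross := funext fun x => mul_critic_mul_mixture (hpos x).ne' c (f x)
  have hcrit_int := funext fun x => critic_sq_mul_mixture (hpos x).ne' c
  rw [integral_sub_sq_mul_weight_of_unit hf (hcrit_int ▸ hchi.const_mul _)
    (hcross ▸ (hfp.sub hfq).const_mul _) hf1 hcrit, hcross, integral_const_mul,
    integral_sub hfp hfq]
  ring

theorem fisher_relative_approximation_error_general
    {X : Type*} [MeasurableSpace X] (μ : Measure X) (p q : X → ℝ)
    (hpos : ∀ x, 0 < p x + q x)
    (chi2 : ℝ)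
    (hchi2_pos : 0 < chi2)
    (hchi : Integrable (fun x => (p x - q x) ^ 2 / ((p x + q x) / 2)) μ)
    (fchi : X → ℝ)
    (hfchi : fchi = fun x => (1 / chi2) * ((p x - q x) / ((p x + q x) / 2)))
    (hfchi_norm : ∫ x, fchi x ^ 2 * ((p x + q x) / 2) ∂μ = 1)
    (H : Set (X → ℝ))
    (hH_int : ∀ f ∈ H, Integrable (fun x => f x * p x) μ ∧
        Integrable (fun x => f x * q x) μ ∧
        Integrable (fun x => f x ^ 2 * ((p x + q x) / 2)) μ)
    (hH_ne : ∃ f ∈ H, ∫ x, f x ^ 2 * ((p x + q x) / 2) ∂μ = 1) :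
    (chi2 - sSup {r : ℝ | ∃ f ∈ H, ∫ x, f x ^ 2 * ((p x + q x) / 2) ∂μ = 1 ∧
          r = ∫ x, f x * p x ∂μ - ∫ x, f x * q x ∂μ}) / chi2 =
      (1 / 2) * sInf {r : ℝ | ∃ f ∈ H, ∫ x, f x ^ 2 * ((p x + q x) / 2) ∂μ = 1 ∧
          r = ∫ x, (f x - fchi x) ^ 2 * ((p x + q x) / 2) ∂μ} := by
  set S := {r : ℝ | ∃ f ∈ H, ∫ x, f x ^ 2 * ((p x + q x) / 2) ∂μ = 1 ∧
      r = ∫ x, f x * p x ∂μ - ∫ x, f x * q x ∂μ}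
  have key : ∀ f ∈ H, ∫ x, f x ^ 2 * ((p x + q x) / 2) ∂μ = 1 →
      ∫ x, (f x - fchi x) ^ 2 * ((p x + q x) / 2) ∂μ =
        2 - 2 / chi2 * (∫ x, f x * p x ∂μ - ∫ x, f x * q x ∂μ) := fun f hf hf1 =>
    integral_sub_critic_sq chi2 hpos hchi hfchi hfchi_norm (hH_int f hf).1 (hH_int f hf).2.1
      (hH_int f hf).2.2 hf1
  have hU : {r : ℝ | ∃ f ∈ H, ∫ x, f x ^ 2 * ((p x + q x) / 2) ∂μ = 1 ∧
      r = ∫ x, (f x - fchi x) ^ 2 * ((p x + q x) / 2) ∂μ}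
      = (fun t => 2 - 2 / chi2 * t) '' S := by
    ext r
    constructor
    · rintro ⟨f, hf, hf1, rfl⟩
      exact ⟨_, ⟨f, hf, hf1, rfl⟩, (key f hf hf1).symm⟩
    · rintro ⟨t, ⟨f, hf, hf1, rfl⟩, rfl⟩
      exact ⟨f, hf, hf1, (key f hf hf1).symm⟩
  -- `‖f - f_χ‖² ≥ 0` is Cauchy–Schwarz against the unit critic: `E_P f - E_Q f ≤ χ`.
  have hbdd : BddAbove S := by
    refine ⟨chi2, ?_⟩
    rintro r ⟨f, hf, hf1, rfl⟩
    have hnonneg := key f hf hf1 ▸ integral_nonneg fun x => by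
      have := (hpos x).le
      positivity
    rw [div_mul_eq_mul_div, sub_nonneg, div_le_iff₀ hchi2_pos] at hnonneg
    linarith
  obtain ⟨f, hf, hf1⟩ := hH_ne
  rw [hU, csInf_image_const_sub_mul (S := S) ⟨_, f, hf, hf1, rfl⟩ hbdd 2 (by positivity)]
  field_simp

/-- Relative approximation error identity:
`(chi2 - d_H)/chi2 = (1/2) · inf_{f ∈ H ∩ sphere} ‖f - f_chi‖²_{L²(X,(P+Q)/2)}`. -/
theorem fisher_relative_approximation_error
    {X : Type*} [MeasurableSpace X] (μ : Measure X) (p q : X → ℝ)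
    (hp : Measurable p) (hq : Measurable q)
    (hp0 : ∀ x, 0 ≤ p x) (hq0 : ∀ x, 0 ≤ q x)
    (hp1 : ∫ x, p x ∂μ = 1) (hq1 : ∫ x, q x ∂μ = 1)
    (hpq : ¬ (p =ᵐ[μ] q))
    (hpos : ∀ x, 0 < p x + q x)
    (chi2 : ℝ)
    (hchi2 : chi2 = Real.sqrt (∫ x, (p x - q x) ^ 2 / ((p x + q x) / 2) ∂μ))
    (hchi2_pos : 0 < chi2)
    (hchi : Integrable (fun x => (p x - q x) ^ 2 / ((p x + q x) / 2)) μ)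
    (fchi : X → ℝ)
    (hfchi : fchi = fun x => (1 / chi2) * ((p x - q x) / ((p x + q x) / 2)))
    (hfchi_norm : ∫ x, fchi x ^ 2 * ((p x + q x) / 2) ∂μ = 1)
    (H : Set (X → ℝ)) (hH : ∀ f ∈ H, Measurable f)
    (hH_symm : ∀ f ∈ H, (fun x => - f x) ∈ H)
    (hH_int : ∀ f ∈ H, Integrable (fun x => f x * p x) μ ∧
        Integrable (fun x => f x * q x) μ ∧
        Integrable (fun x => f x ^ 2 * ((p x + q x) / 2)) μ)
    (hH_ne : ∃ f ∈ H, ∫ x, f x ^ 2 * ((p x + q x) / 2) ∂μ = 1) :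
    (chi2 - sSup {r : ℝ | ∃ f ∈ H, ∫ x, f x ^ 2 * ((p x + q x) / 2) ∂μ = 1 ∧
          r = ∫ x, f x * p x ∂μ - ∫ x, f x * q x ∂μ}) / chi2 =
      (1 / 2) * sInf {r : ℝ | ∃ f ∈ H, ∫ x, f x ^ 2 * ((p x + q x) / 2) ∂μ = 1 ∧
          r = ∫ x, (f x - fchi x) ^ 2 * ((p x + q x) / 2) ∂μ} :=
  fisher_relative_approximation_error_general μ p q hpos chi2 hchi2_pos hchi fchi hfchi hfchi_norm H
    hH_int hH_ne
end

section
/- For the fixed feature map case, the local Rademacher complexity of the constrained linear class is bounded: E_σ sup over v with vᵀ(Σ_N + Σ_M + γI)v ≤ 2R of ⟨v, Σᵢ σᵢ Ỹᵢ Φ(Xᵢ)⟩ ≤ sqrt(2R·(M+N)/(MN)) · sqrt(d(γ)), where d(γ) = Tr((Σ_N + Σ_M + γI)⁻¹(Σ_N + Σ_M)) is the effective dimension. -/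
open Matrix

/-!
Write `A = Σ_N + Σ_M + γ I` and `w_σ = ∑ σᵢ Ỹᵢ Φ(Xᵢ)`. For fixed signs, Cauchy–Schwarz in the
inner product `⟨u, v⟩_A = uᵀ A v` bounds the supremum of `⟨v, w_σ⟩` over `vᵀ A v ≤ 2R` by
`√(2R · w_σᵀ A⁻¹ w_σ)`. Jensen moves the average over the signs inside the square root, where
the cross terms of `w_σᵀ A⁻¹ w_σ` cancel, leaving
`∑ Ỹᵢ² Φᵢᵀ A⁻¹ Φᵢ = N⁻² ∑_{i ≤ N} Φᵢᵀ A⁻¹ Φᵢ + M⁻² ∑_{i > N} Φᵢᵀ A⁻¹ Φᵢ`,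
which is at most `(1/N + 1/M) · Tr(A⁻¹ (Σ_N + Σ_M))`.
-/

/-- Unfolds to the `if b then 1 else -1` of the statement. -/
def boolSign (b : Bool) : ℝ := if b then 1 else -1

lemma boolSign_mul_self (b : Bool) : boolSign b * boolSign b = 1 := by
  cases b <;> norm_num [boolSign]

lemma sum_boolSign_mul_boolSign {ι : Type*} [Fintype ι] [DecidableEq ι] (i j : ι) :
    ∑ ε : ι → Bool, boolSign (ε i) * boolSign (ε j) =
      if i = j then 2 ^ Fintype.card ι else 0 := by
  split_ifs with hij
  · subst hij
    simp [boolSign_mul_self]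
  · -- flipping the sign at `i` negates each term
    refine Finset.sum_involution (fun ε _ => Function.update ε i (!ε i)) ?_ ?_ (by simp) ?_
    · intro ε _
      simp only [Function.update_self, Function.update_of_ne (Ne.symm hij)]
      cases ε i <;> cases ε j <;> norm_num [boolSign]
    · intro ε _ _ h
      simpa using congrFun h i
    · intro ε _
      simp

def signedSum {ι n : Type*} [Fintype ι] (ε : ι → Bool) (a : ι → ℝ) (x : ι → n → ℝ) : n → ℝ :=
  ∑ i, (boolSign (ε i) * a i) • x i

lemma sum_signedSum_dotProduct_mulVec {ι n : Type*} [Fintype ι] [DecidableEq ι] [Fintype n]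
    (B : Matrix n n ℝ) (a : ι → ℝ) (x : ι → n → ℝ) :
    ∑ ε : ι → Bool, signedSum ε a x ⬝ᵥ B *ᵥ signedSum ε a x
      = 2 ^ Fintype.card ι * ∑ i, a i ^ 2 * (x i ⬝ᵥ B *ᵥ x i) := by
  simp only [signedSum, mulVec_sum, mulVec_smul, sum_dotProduct, dotProduct_sum, smul_dotProduct,
    dotProduct_smul, smul_eq_mul, Finset.mul_sum]
  calc _ = ∑ i, ∑ j, (∑ ε : ι → Bool, boolSign (ε i) * boolSign (ε j)) *
        (a i * a j * (x j ⬝ᵥ B *ᵥ x i)) := by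
        rw [Finset.sum_comm]
        refine Finset.sum_congr rfl fun i _ => ?_
        rw [Finset.sum_comm]
        refine Finset.sum_congr rfl fun j _ => ?_
        rw [Finset.sum_mul]
        exact Finset.sum_congr rfl fun ε _ => by ring
    _ = _ := by
        simp only [sum_boolSign_mul_boolSign, ite_mul, zero_mul, Finset.sum_ite_eq,
          Finset.mem_univ, if_true]
        exact Finset.sum_congr rfl fun i _ => by ring

section
variable {n : Type*} [Fintype n]

lemma dotProduct_mulVec_sq_le {A : Matrix n n ℝ} (hA : A.PosSemidef) (u v : n → ℝ) :
    (u ⬝ᵥ A *ᵥ v) ^ 2 ≤ (u ⬝ᵥ A *ᵥ u) * (v ⬝ᵥ A *ᵥ v) := by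
  classical
  have hsymm : LinearMap.IsSymm (toBilin' A) := LinearMap.BilinForm.isSymm_iff.mp <|
    isSymm_toBilin'_iff_isSymm.mpr (isHermitian_iff_isSymm.mp hA.isHermitian)
  have hnonneg : ∀ x, 0 ≤ toBilin' A x x := fun x => by
    simpa only [toBilin'_apply', star_trivial] using hA.dotProduct_mulVec_nonneg x
  simpa only [toBilin'_apply'] using (toBilin' A).apply_sq_le_of_symm hnonneg hsymm u v

variable [DecidableEq n]

lemma sSup_dotProduct_le_sqrt {A : Matrix n n ℝ} (hA : A.PosDef) (c : ℝ) (w : n → ℝ) :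
    sSup {r : ℝ | ∃ v : n → ℝ, v ⬝ᵥ A *ᵥ v ≤ c ∧ r = v ⬝ᵥ w} ≤ √(c * (w ⬝ᵥ A⁻¹ *ᵥ w)) := by
  refine Real.sSup_le ?_ (Real.sqrt_nonneg _)
  rintro _ ⟨v, hv, rfl⟩
  have hw : A *ᵥ (A⁻¹ *ᵥ w) = w := by
    rw [mulVec_mulVec, mul_nonsing_inv _ hA.det_pos.ne'.isUnit, one_mulVec]
  have hq : (A⁻¹ *ᵥ w) ⬝ᵥ A *ᵥ (A⁻¹ *ᵥ w) = w ⬝ᵥ A⁻¹ *ᵥ w := by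
    rw [hw, dotProduct_comm]
  have hq0 : 0 ≤ w ⬝ᵥ A⁻¹ *ᵥ w := hA.inv.posSemidef.dotProduct_mulVec_nonneg w
  apply Real.le_sqrt_of_sq_le
  calc (v ⬝ᵥ w) ^ 2 = (v ⬝ᵥ A *ᵥ (A⁻¹ *ᵥ w)) ^ 2 := by rw [hw]
    _ ≤ (v ⬝ᵥ A *ᵥ v) * (w ⬝ᵥ A⁻¹ *ᵥ w) := by
        simpa only [hq] using dotProduct_mulVec_sq_le hA.posSemidef v (A⁻¹ *ᵥ w)
    _ ≤ c * (w ⬝ᵥ A⁻¹ *ᵥ w) := by gcongr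
end

lemma mean_sqrt_le_sqrt_mean {ι : Type*} [Fintype ι] [Nonempty ι] (f : ι → ℝ)
    (hf : ∀ i, 0 ≤ f i) :
    (Fintype.card ι : ℝ)⁻¹ * ∑ i, √(f i) ≤ √((Fintype.card ι : ℝ)⁻¹ * ∑ i, f i) := by
  have hw : ∑ _i : ι, (Fintype.card ι : ℝ)⁻¹ = 1 := by simp
  have := Real.strictConcaveOn_sqrt.concaveOn.le_map_sum (t := Finset.univ)
    (w := fun _ => (Fintype.card ι : ℝ)⁻¹) (p := f) (fun _ _ => by positivity) hw
    (fun i _ => hf i)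
  simpa only [smul_eq_mul, Finset.mul_sum] using this

lemma rademacher_sSup_ellipsoid_le {ι n : Type*} [Fintype ι] [DecidableEq ι] [Fintype n]
    [DecidableEq n] {A : Matrix n n ℝ} (hA : A.PosDef) (c : ℝ) (a : ι → ℝ) (x : ι → n → ℝ) :
    (2 ^ Fintype.card ι : ℝ)⁻¹ * ∑ ε : ι → Bool,
        sSup {r : ℝ | ∃ v : n → ℝ, v ⬝ᵥ A *ᵥ v ≤ c ∧ r = v ⬝ᵥ signedSum ε a x}
      ≤ √c * √(∑ i, a i ^ 2 * (x i ⬝ᵥ A⁻¹ *ᵥ x i)) := by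
  set q : (ι → Bool) → ℝ := fun ε => signedSum ε a x ⬝ᵥ A⁻¹ *ᵥ signedSum ε a x
  have hq : ∀ ε, 0 ≤ q ε := fun ε => hA.inv.posSemidef.dotProduct_mulVec_nonneg _
  have hcard : (Fintype.card (ι → Bool) : ℝ) = 2 ^ Fintype.card ι := by simp
  calc _ ≤ (2 ^ Fintype.card ι : ℝ)⁻¹ * ∑ ε, √c * √(q ε) := by
        gcongr with ε
        rw [← Real.sqrt_mul' c (hq ε)]
        exact sSup_dotProduct_le_sqrt hA c _
    _ = √c * ((Fintype.card (ι → Bool) : ℝ)⁻¹ * ∑ ε, √(q ε)) := by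
        rw [← Finset.mul_sum, hcard]; ring
    _ ≤ √c * √((Fintype.card (ι → Bool) : ℝ)⁻¹ * ∑ ε, q ε) := by
        gcongr; exact mean_sqrt_le_sqrt_mean q hq
    _ = _ := by
        rw [hcard, sum_signedSum_dotProduct_mulVec, inv_mul_cancel_left₀ (by positivity)]

section
variable {ι n : Type*} [Fintype n]

lemma posSemidef_smul_sum_vecMulVec_self {c : ℝ} (hc : 0 ≤ c) (s : Finset ι) (x : ι → n → ℝ) :
    (c • ∑ i ∈ s, vecMulVec (x i) (x i)).PosSemidef :=
  (posSemidef_sum s fun i _ => by simpa using posSemidef_vecMulVec_self_star (x i)).smul hc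

lemma trace_mul_smul_sum_vecMulVec_self (B : Matrix n n ℝ) (c : ℝ) (s : Finset ι)
    (x : ι → n → ℝ) :
    (B * (c • ∑ i ∈ s, vecMulVec (x i) (x i))).trace = c * ∑ i ∈ s, x i ⬝ᵥ B *ᵥ x i := by
  simp only [Matrix.mul_smul, Matrix.mul_sum, trace_smul, trace_sum, mul_vecMulVec,
    trace_vecMulVec, dotProduct_comm (B *ᵥ _), smul_eq_mul]
end

lemma sum_sq_ite_mul_le {ι : Type*} [Fintype ι] (p : ι → Prop) [DecidablePred p] {a b : ℝ}
    (ha : 0 < a) (hb : 0 < b) (t : ι → ℝ) (ht : ∀ i, 0 ≤ t i) :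
    ∑ i, (if p i then a⁻¹ else -b⁻¹) ^ 2 * t i ≤
      (b + a) / (b * a) *
        (a⁻¹ * ∑ i ∈ Finset.univ.filter p, t i + b⁻¹ * ∑ i ∈ Finset.univ.filter (¬ p ·), t i) := by
  have hsplit : ∑ i, (if p i then a⁻¹ else -b⁻¹) ^ 2 * t i =
      a⁻¹ * (a⁻¹ * ∑ i ∈ Finset.univ.filter p, t i) +
        b⁻¹ * (b⁻¹ * ∑ i ∈ Finset.univ.filter (¬ p ·), t i) := by
    rw [← Finset.sum_filter_add_sum_filter_not Finset.univ p, Finset.mul_sum, Finset.mul_sum,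
      Finset.mul_sum, Finset.mul_sum]
    congr 1 <;> refine Finset.sum_congr rfl fun i hi => ?_ <;>
      simp only [(Finset.mem_filter.mp hi).2, if_true, if_false] <;> ring
  have hab : (b + a) / (b * a) = a⁻¹ + b⁻¹ := by
    field_simp
  have hTp : 0 ≤ ∑ i ∈ Finset.univ.filter p, t i := Finset.sum_nonneg fun i _ => ht i
  have hTnp : 0 ≤ ∑ i ∈ Finset.univ.filter (¬ p ·), t i := Finset.sum_nonneg fun i _ => ht i
  have hainv : 0 ≤ a⁻¹ := by positivity
  have hbinv : 0 ≤ b⁻¹ := by positivity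
  rw [hsplit, hab]
  nlinarith [mul_nonneg (mul_nonneg hainv hbinv) hTp, mul_nonneg (mul_nonneg hainv hbinv) hTnp]

theorem local_rademacher_linear_class_bound_general
    (N M m : ℕ) (hN : 0 < N) (hM : 0 < M)
    (pts : Fin (N + M) → (Fin m → ℝ))
    (Y : Fin (N + M) → ℝ)
    (hY : Y = fun i : Fin (N + M) => if (i : ℕ) < N then (N : ℝ)⁻¹ else -(M : ℝ)⁻¹)
    (SigN SigM : Matrix (Fin m) (Fin m) ℝ)
    (hSigN : SigN = (N : ℝ)⁻¹ •
        ∑ i ∈ Finset.univ.filter (fun i : Fin (N + M) => (i : ℕ) < N),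
          vecMulVec (pts i) (pts i))
    (hSigM : SigM = (M : ℝ)⁻¹ •
        ∑ i ∈ Finset.univ.filter (fun i : Fin (N + M) => ¬ (i : ℕ) < N),
          vecMulVec (pts i) (pts i))
    (γ : ℝ) (hγ : 0 < γ) (R : ℝ) :
    (2 ^ (N + M) : ℝ)⁻¹ *
      ∑ ε : Fin (N + M) → Bool,
        sSup {r : ℝ | ∃ v : Fin m → ℝ,
          v ⬝ᵥ (SigN + SigM + γ • (1 : Matrix (Fin m) (Fin m) ℝ)).mulVec v ≤ 2 * R ∧
          r = v ⬝ᵥ (∑ i, ((if ε i then (1 : ℝ) else -1) * Y i) • pts i)} ≤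
    Real.sqrt (2 * R * ((M : ℝ) + N) / ((M : ℝ) * N)) *
      Real.sqrt (((SigN + SigM + γ • (1 : Matrix (Fin m) (Fin m) ℝ))⁻¹ *
        (SigN + SigM)).trace) := by
  set A := SigN + SigM + γ • (1 : Matrix (Fin m) (Fin m) ℝ)
  have hSig : (SigN + SigM).PosSemidef := by
    rw [hSigN, hSigM]
    exact (posSemidef_smul_sum_vecMulVec_self (by positivity) _ _).add
      (posSemidef_smul_sum_vecMulVec_self (by positivity) _ _)
  have hA : A.PosDef := PosDef.posSemidef_add hSig (PosDef.one.smul hγ)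
  set t : Fin (N + M) → ℝ := fun i => pts i ⬝ᵥ A⁻¹ *ᵥ pts i
  have ht : ∀ i, 0 ≤ t i := fun i => hA.inv.posSemidef.dotProduct_mulVec_nonneg (pts i)
  have hrad := rademacher_sSup_ellipsoid_le hA (2 * R) Y pts
  rw [Fintype.card_fin] at hrad
  have hc0 : 0 ≤ ((M : ℝ) + N) / (M * N) := by positivity
  calc _ ≤ √(2 * R) * √(∑ i, Y i ^ 2 * t i) := hrad
    _ ≤ √(2 * R) * √(((M : ℝ) + N) / (M * N) * (A⁻¹ * (SigN + SigM)).trace) := by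
        gcongr
        rw [hSigN, hSigM, Matrix.mul_add, trace_add, trace_mul_smul_sum_vecMulVec_self,
          trace_mul_smul_sum_vecMulVec_self, hY]
        exact sum_sq_ite_mul_le _ (Nat.cast_pos.mpr hN) (Nat.cast_pos.mpr hM) t ht
    _ = √(2 * R * ((M : ℝ) + N) / (M * N)) * √((A⁻¹ * (SigN + SigM)).trace) := by
        rw [Real.sqrt_mul hc0, ← mul_assoc, ← Real.sqrt_mul' _ hc0, mul_div_assoc]

/-- Local Rademacher complexity bound for the constrained linear critic class with
a fixed feature map: it is bounded by `sqrt(2R(M+N)/(MN))·sqrt(d(γ))` where `d(γ)` is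
the effective dimension. -/
theorem local_rademacher_linear_class_bound
    (N M m : ℕ) (hN : 0 < N) (hM : 0 < M)
    (pts : Fin (N + M) → (Fin m → ℝ))
    (Y : Fin (N + M) → ℝ)
    (hY : Y = fun i : Fin (N + M) => if (i : ℕ) < N then (N : ℝ)⁻¹ else -(M : ℝ)⁻¹)
    (SigN SigM : Matrix (Fin m) (Fin m) ℝ)
    (hSigN : SigN = (N : ℝ)⁻¹ •
        ∑ i ∈ Finset.univ.filter (fun i : Fin (N + M) => (i : ℕ) < N),
          vecMulVec (pts i) (pts i))
    (hSigM : SigM = (M : ℝ)⁻¹ •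
        ∑ i ∈ Finset.univ.filter (fun i : Fin (N + M) => ¬ (i : ℕ) < N),
          vecMulVec (pts i) (pts i))
    (γ : ℝ) (hγ : 0 < γ) (R : ℝ) (hR : 0 < R) :
    (2 ^ (N + M) : ℝ)⁻¹ *
      ∑ ε : Fin (N + M) → Bool,
        sSup {r : ℝ | ∃ v : Fin m → ℝ,
          v ⬝ᵥ (SigN + SigM + γ • (1 : Matrix (Fin m) (Fin m) ℝ)).mulVec v ≤ 2 * R ∧
          r = v ⬝ᵥ (∑ i, ((if ε i then (1 : ℝ) else -1) * Y i) • pts i)} ≤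
    Real.sqrt (2 * R * ((M : ℝ) + N) / ((M : ℝ) * N)) *
      Real.sqrt (((SigN + SigM + γ • (1 : Matrix (Fin m) (Fin m) ℝ))⁻¹ *
        (SigN + SigM)).trace) :=
  local_rademacher_linear_class_bound_general N M m hN hM pts Y hY SigN SigM hSigN hSigM γ hγ R
end
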